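/- Let X be a metric space, c > 0, U a topological space, and D : U → Set X a Hausdorff-continuous family of nonempty 2c-separated subsets. Let π, π' : [0,1] → U be continuous paths with π(0) = π'(0) and π(1) = π'(1), which are homotopic relative to their common endpoints (i.e., there is a continuous H : [0,1] × [0,1] → U with H(t,0) = π(t), H(t,1) = π'(t), H(0,s) = π(0) and H(1,s) = π(1) for all t, s). Then for every X₀ ∈ D(π(0)), the unique lifts P of π and P' of π' with P(0) = P'(0) = X₀ satisfy P(1) = P'(1). In other words, the transport maps along homotopic paths coincide: T_π ≡ T_{π'}. -/

import Mathlib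

/-!
Along the homotopy, whether the lift of the row `t ↦ H (t, s)` starting at `X₀` ends at
`P 1` is a locally constant property of `s`. By compactness of `[0,1]`, nearby rows have
uniformly `c/4`-close fibres; the `2c`-separation then lets a lift be pushed to a nearby
row, and it keeps its endpoints because all rows share them. Connectedness of `[0,1]` and
uniqueness of lifts conclude.
-/

open unitInterval

/-- `P` is a lift of the path `π` through the family of subsets `D`. -/
def IsLift {X U : Type*} [MetricSpace X] [TopologicalSpace U]
    (D : U → Set X) (π : unitInterval → U) (P : unitInterval → X) : Prop :=
  Continuous P ∧ ∀ τ : unitInterval, P τ ∈ D (π τ)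

open Filter Topology Metric

section Transport

variable {X U : Type*} [MetricSpace X] {c : ℝ} {D : U → Set X}

theorem eq_of_mem_of_dist_le
    (hsep : ∀ p : U, ∀ x ∈ D p, ∀ y ∈ D p, x ≠ y → 2 * c < dist x y)
    {p : U} {x y : X} (hx : x ∈ D p) (hy : y ∈ D p) (h : dist x y ≤ 2 * c) : x = y := by
  by_contra hne
  exact (hsep p x hx y hy hne).not_ge h

variable [TopologicalSpace U]

/-- A nearby fibre has a point close to `Q t`, and separation forces it to be `Q t₀`. -/
theorem continuous_of_eventually_dist_lt {T : Type*} [TopologicalSpace T] (hc : 0 < c)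
    (hsep : ∀ p : U, ∀ x ∈ D p, ∀ y ∈ D p, x ≠ y → 2 * c < dist x y)
    (hcont : ∀ p : U, ∀ ε : ℝ, 0 < ε → ∃ V ∈ 𝓝 p, ∀ q ∈ V,
      hausdorffEDist (D p) (D q) ≤ ENNReal.ofReal ε)
    {γ : T → U} (hγ : Continuous γ) {Q : T → X} (hmem : ∀ t, Q t ∈ D (γ t))
    (hjump : ∀ t₀, ∀ᶠ t in 𝓝 t₀, dist (Q t) (Q t₀) < c) : Continuous Q := by
  refine continuous_iff_continuousAt.mpr fun t₀ => Metric.tendsto_nhds.mpr fun ε hε => ?_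
  set θ := min ε c
  have hθ : 0 < θ := lt_min hε hc
  obtain ⟨V, hV, hVD⟩ := hcont (γ t₀) (θ / 2) (half_pos hθ)
  filter_upwards [hjump t₀, hγ.continuousAt hV] with t hQt hγt
  have hD : hausdorffEDist (D (γ t)) (D (γ t₀)) < ENNReal.ofReal θ :=
    hausdorffEDist_comm.trans_le (hVD _ hγt) |>.trans_lt <|
      (ENNReal.ofReal_lt_ofReal_iff hθ).mpr (half_lt_self hθ)
  obtain ⟨z, hz, hQz⟩ := exists_edist_lt_of_hausdorffEDist_lt (hmem t) hD
  rw [edist_lt_ofReal] at hQz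
  have hz_eq : z = Q t₀ := by
    refine eq_of_mem_of_dist_le hsep hz (hmem t₀) ?_
    have := dist_triangle_left z (Q t₀) (Q t)
    linarith [min_le_right ε c]
  rw [← hz_eq]
  exact hQz.trans_le (min_le_left ε c)

theorem IsLift.unique (hc : 0 < c)
    (hsep : ∀ p : U, ∀ x ∈ D p, ∀ y ∈ D p, x ≠ y → 2 * c < dist x y)
    {γ : I → U} {Q₁ Q₂ : I → X} (h₁ : IsLift D γ Q₁) (h₂ : IsLift D γ Q₂)
    (h0 : Q₁ 0 = Q₂ 0) : Q₁ = Q₂ := by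
  have hopen : {t | Q₁ t = Q₂ t} = {t | dist (Q₁ t) (Q₂ t) < 2 * c} := by
    ext t
    refine ⟨fun h => ?_, fun h => eq_of_mem_of_dist_le hsep (h₁.2 t) (h₂.2 t) h.le⟩
    show dist (Q₁ t) (Q₂ t) < 2 * c
    rw [h, dist_self]
    positivity
  have hclopen : IsClopen {t | Q₁ t = Q₂ t} :=
    ⟨isClosed_eq h₁.1 h₂.1, hopen ▸ isOpen_lt (h₁.1.dist h₂.1) continuous_const⟩
  have huniv := hclopen.eq_univ ⟨0, h0⟩
  exact funext (Set.eq_univ_iff_forall.mp huniv)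

/-- `Q' t` is the point of `D (γ' t)` within `c/3` of `Q t`. -/
theorem IsLift.exists_isLift_of_hausdorffEDist_le (hc : 0 < c)
    (hsep : ∀ p : U, ∀ x ∈ D p, ∀ y ∈ D p, x ≠ y → 2 * c < dist x y)
    (hcont : ∀ p : U, ∀ ε : ℝ, 0 < ε → ∃ V ∈ 𝓝 p, ∀ q ∈ V,
      hausdorffEDist (D p) (D q) ≤ ENNReal.ofReal ε)
    {γ γ' : I → U} (hγ' : Continuous γ')
    (hclose : ∀ t, hausdorffEDist (D (γ t)) (D (γ' t)) ≤ ENNReal.ofReal (c / 4))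
    {Q : I → X} (hQ : IsLift D γ Q) :
    ∃ Q' : I → X, IsLift D γ' Q' ∧ ∀ t, γ' t = γ t → Q' t = Q t := by
  have hnear : ∀ t, ∃ y ∈ D (γ' t), edist (Q t) y < ENNReal.ofReal (c / 3) := fun t =>
    exists_edist_lt_of_hausdorffEDist_lt (hQ.2 t) <| (hclose t).trans_lt <|
      (ENNReal.ofReal_lt_ofReal_iff (by positivity)).mpr (by linarith)
  choose Q' hmem hdist using hnear
  simp only [edist_lt_ofReal] at hdist
  have hjump : ∀ t₀, ∀ᶠ t in 𝓝 t₀, dist (Q' t) (Q' t₀) < c := fun t₀ => by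
    filter_upwards [Metric.tendsto_nhds.mp hQ.1.continuousAt (c / 3) (by positivity)]
      with t ht
    have := dist_triangle4 (Q' t) (Q t) (Q t₀) (Q' t₀)
    linarith [dist_comm (Q' t) (Q t), hdist t, hdist t₀]
  refine ⟨Q', ⟨continuous_of_eventually_dist_lt hc hsep hcont hγ' hmem hjump, hmem⟩,
    fun t ht => ?_⟩
  refine eq_of_mem_of_dist_le hsep (hmem t) (ht ▸ hQ.2 t) ?_
  linarith [dist_comm (Q' t) (Q t), hdist t]

theorem eventually_forall_hausdorffEDist_le {T S : Type*} [TopologicalSpace T]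
    [CompactSpace T] [TopologicalSpace S]
    (hcont : ∀ p : U, ∀ ε : ℝ, 0 < ε → ∃ V ∈ 𝓝 p, ∀ q ∈ V,
      hausdorffEDist (D p) (D q) ≤ ENNReal.ofReal ε)
    {H : T × S → U} (hH : Continuous H) (s₀ : S) {ε : ℝ} (hε : 0 < ε) :
    ∀ᶠ s in 𝓝 s₀, ∀ t, hausdorffEDist (D (H (t, s₀))) (D (H (t, s))) ≤ ENNReal.ofReal ε := by
  have hlocal : ∀ t ∈ (Set.univ : Set T), ∀ᶠ z : S × T in 𝓝 (s₀, t),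
      hausdorffEDist (D (H (z.2, s₀))) (D (H (z.2, z.1))) ≤ ENNReal.ofReal ε := by
    intro t _
    obtain ⟨V, hV, hVD⟩ := hcont (H (t, s₀)) (ε / 2) (half_pos hε)
    have hmoving : ∀ᶠ z : S × T in 𝓝 (s₀, t), H (z.2, z.1) ∈ V :=
      (hH.comp continuous_swap).continuousAt hV
    have hfixed : ∀ᶠ z : S × T in 𝓝 (s₀, t), H (z.2, s₀) ∈ V :=
      (hH.comp (continuous_snd.prodMk continuous_const)).continuousAt hV
    filter_upwards [hmoving, hfixed] with z hz hz₀
    calc hausdorffEDist (D (H (z.2, s₀))) (D (H (z.2, z.1)))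
        ≤ hausdorffEDist (D (H (z.2, s₀))) (D (H (t, s₀)))
          + hausdorffEDist (D (H (t, s₀))) (D (H (z.2, z.1))) := hausdorffEDist_triangle
      _ ≤ ENNReal.ofReal (ε / 2) + ENNReal.ofReal (ε / 2) :=
          add_le_add (hausdorffEDist_comm.trans_le (hVD _ hz₀)) (hVD _ hz)
      _ = ENNReal.ofReal ε := by
          rw [← ENNReal.ofReal_add (by positivity) (by positivity), add_halves]
  filter_upwards [isCompact_univ.eventually_forall_of_forall_eventually (P := fun s t =>
    hausdorffEDist (D (H (t, s₀))) (D (H (t, s))) ≤ ENNReal.ofReal ε) hlocal] with s hs t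
  exact hs t (Set.mem_univ t)

end Transport

theorem stmt_10_general {X U : Type*} [MetricSpace X] [TopologicalSpace U]
    (c : ℝ) (hc : 0 < c) (D : U → Set X)
    (hsep : ∀ p : U, ∀ x ∈ D p, ∀ y ∈ D p, x ≠ y → 2 * c < dist x y)
    (hcont : ∀ p : U, ∀ ε : ℝ, 0 < ε → ∃ V ∈ nhds p, ∀ q ∈ V,
      EMetric.hausdorffEdist (D p) (D q) ≤ ENNReal.ofReal ε)
    (π π' : unitInterval → U)
    (H : unitInterval × unitInterval → U) (hH : Continuous H)
    (hH0 : ∀ t : unitInterval, H (t, 0) = π t)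
    (hH1 : ∀ t : unitInterval, H (t, 1) = π' t)
    (hHl : ∀ s : unitInterval, H (0, s) = π 0)
    (hHr : ∀ s : unitInterval, H (1, s) = π 1) :
    ∀ X₀ ∈ D (π 0), ∀ P P' : unitInterval → X,
      IsLift D π P → IsLift D π' P' → P 0 = X₀ → P' 0 = X₀ → P 1 = P' 1 := by
  intro X₀ _ P P' hP hP' hP0 hP'0
  let liftsRow (s : I) : Prop :=
    ∃ Q, IsLift D (fun t => H (t, s)) Q ∧ Q 0 = X₀ ∧ Q 1 = P 1
  have htransfer : ∀ s s' : I, (∀ t, hausdorffEDist (D (H (t, s))) (D (H (t, s'))) ≤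
      ENNReal.ofReal (c / 4)) → liftsRow s → liftsRow s' := by
    rintro s s' hclose ⟨Q, hQ, hQ0, hQ1⟩
    obtain ⟨Q', hQ', hagree⟩ := hQ.exists_isLift_of_hausdorffEDist_le hc hsep hcont
      (hH.comp (Continuous.prodMk_left s')) hclose
    exact ⟨Q', hQ', (hagree 0 ((hHl s').trans (hHl s).symm)).trans hQ0,
      (hagree 1 ((hHr s').trans (hHr s).symm)).trans hQ1⟩
  have hlocconst : IsLocallyConstant liftsRow := by
    refine (IsLocallyConstant.iff_eventually_eq _).mpr fun s₀ => ?_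
    filter_upwards [eventually_forall_hausdorffEDist_le hcont hH s₀ (by positivity : 0 < c / 4)]
      with s hs
    exact propext ⟨htransfer s s₀ fun t => hausdorffEDist_comm.trans_le (hs t),
      htransfer s₀ s hs⟩
  have hrow0 : liftsRow 0 := ⟨P, by simpa only [hH0] using hP, hP0, rfl⟩
  obtain ⟨Q, hQ, hQ0, hQ1⟩ : liftsRow 1 := hlocconst.apply_eq_of_preconnectedSpace 0 1 ▸ hrow0
  simp only [hH1] at hQ
  rw [← hQ1, hQ.unique hc hsep hP' (hQ0.trans hP'0.symm)]

/-- Abstract form of Proposition 4.8 (homotopy invariance of the transport): if `π` and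
`π'` are continuous paths with the same endpoints which are homotopic relative to their
endpoints, then lifts of `π` and `π'` starting at the same point `X₀ ∈ D (π 0)` end at
the same point, i.e. `T_π ≡ T_{π'}`. -/
theorem stmt_10 {X U : Type*} [MetricSpace X] [TopologicalSpace U]
    (c : ℝ) (hc : 0 < c) (D : U → Set X)
    (hne : ∀ p : U, (D p).Nonempty)
    (hsep : ∀ p : U, ∀ x ∈ D p, ∀ y ∈ D p, x ≠ y → 2 * c < dist x y)
    (hcont : ∀ p : U, ∀ ε : ℝ, 0 < ε → ∃ V ∈ nhds p, ∀ q ∈ V,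
      EMetric.hausdorffEdist (D p) (D q) ≤ ENNReal.ofReal ε)
    (π π' : unitInterval → U) (hπ : Continuous π) (hπ' : Continuous π')
    (h0 : π 0 = π' 0) (h1 : π 1 = π' 1)
    (H : unitInterval × unitInterval → U) (hH : Continuous H)
    (hH0 : ∀ t : unitInterval, H (t, 0) = π t)
    (hH1 : ∀ t : unitInterval, H (t, 1) = π' t)
    (hHl : ∀ s : unitInterval, H (0, s) = π 0)
    (hHr : ∀ s : unitInterval, H (1, s) = π 1) :
    ∀ X₀ ∈ D (π 0), ∀ P P' : unitInterval → X,
      IsLift D π P → IsLift D π' P' → P 0 = X₀ → P' 0 = X₀ → P 1 = P' 1 :=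
  stmt_10_general c hc D hsep hcont π π' H hH hH0 hH1 hHl hHr
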